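/- If a cocyclic n-gon z₁,…,zₙ ∈ ℍ (n ≥ 3, all sidelengths positive) has maximal signed area compared to all n-gons with the same sidelengths, then it is oriented-convex. -/

import Mathlib

open Real Finset

noncomputable section

/-- Points of `ℝ³`. -/
abbrev V3 : Type := Fin 3 → ℝ

/-- The pseudo-Euclidean scalar product `⟨x,y⟩ = x₀y₀ − x₁y₁ − x₂y₂`. -/
def pscal (x y : V3) : ℝ := x 0 * y 0 - x 1 * y 1 - x 2 * y 2

/-- The hyperboloid model `ℍ` of the hyperbolic plane. -/
def Hyp : Set V3 := {x | pscal x x = 1 ∧ 0 < x 0}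

/-- Inverse hyperbolic cosine. -/
def arcoshR (x : ℝ) : ℝ := Real.log (x + Real.sqrt (x ^ 2 - 1))

/-- Hyperbolic distance `d(a,b) = arcosh ⟨a,b⟩`. -/
def dH (a b : V3) : ℝ := arcoshR (pscal a b)

/-- Determinant of the 3×3 matrix with columns `a`, `b`, `c`. -/
def det3 (a b c : V3) : ℝ :=
  a 0 * (b 1 * c 2 - b 2 * c 1) - b 0 * (a 1 * c 2 - a 2 * c 1) + c 0 * (a 1 * b 2 - a 2 * b 1)

/-- `S_ab = sinh(d(a,b)/2)`. -/
def SS (a b : V3) : ℝ := Real.sinh (dH a b / 2)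

/-- Signed area of the triangle `a b c`. -/
def triArea (a b c : V3) : ℝ :=
  2 * Real.arctan (det3 a b c / (pscal a b + pscal b c + pscal c a + 1))

/-- Signed area of the `n`-gon with vertices `z 1, …, z n`. -/
def polyArea (n : ℕ) (z : ℕ → V3) : ℝ :=
  ∑ k ∈ Finset.Ico 2 n, triArea (z 1) (z k) (z (k + 1))

/-- Cyclic successor on `{1, …, n}`. -/
def nxt (n k : ℕ) : ℕ := k % n + 1

/-- Oriented convexity of the `n`-gon `z 1, …, z n`. -/
def OrientedConvex (n : ℕ) (z : ℕ → V3) : Prop :=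
  ∀ k ∈ Finset.Icc 1 n, ∀ j ∈ Finset.Icc 1 n,
    j ≠ k → j ≠ nxt n k → 0 < det3 (z k) (z (nxt n k)) (z j)

/-- A set of points lies in a common 2-dimensional linear subspace of `ℝ³`. -/
def Collin (s : Set V3) : Prop :=
  ∃ W : Submodule ℝ V3, Module.finrank ℝ W = 2 ∧ ∀ x ∈ s, x ∈ W

/-- A set of points lies in a common affine plane of `ℝ³` not containing the origin. -/
def Cocyc (s : Set V3) : Prop :=
  ∃ u : V3, ∃ p : ℝ, u ≠ 0 ∧ p ≠ 0 ∧ ∀ x ∈ s, pscal u x = p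


/-!
On `ℍ` the signed area of a triangle is `2 arg` of `(1 + ⟨a,b⟩ + ⟨b,c⟩ + ⟨c,a⟩) + i [a,b,c]`, and
this complex number is, up to a positive factor, the cyclic product `K(a,b) K(b,c) K(c,a)` of the
Poincaré-disk kernels `K(x,y) = 1 - ζₓ ζ̄ᵧ`. Since `K(y,x) = conj K(x,y)`, both triangulations of a
quadrilateral have the same argument, so area is additive and the area of a polygon is its fan
area from any apex.

If a vertex `z_a` of a maximal polygon lay strictly to the right of an edge `z_b z_{b+1}`, rotating
the chain `z_{a+1}, …, z_b` about `z_a` so that `z_b` is reflected in the geodesic `z_a z_{b+1}`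
would keep all sidelengths and add `-2 F(z_a, z_b, z_{b+1}) > 0` to the area. Hence
`[z_k, z_{k+1}, z_j] ≥ 0` for all `j, k`. In the equality case `z_j` lies on the geodesic through
`z_k, z_{k+1}` and on the circle through all vertices, so it is one of these two. Finally a maximal
cocyclic polygon has no repeated vertex: at a pinch `z_n = z_j` the inequalities and cocyclicity
force `z_{j-1} = z_{n-1}`, and a suitable rotation of the loop `z_1, …, z_{j-1}` about the pinch
point keeps sides and area but violates the inequality.
-/

lemma pscal_comm (x y : V3) : pscal x y = pscal y x := by unfold pscal; ring

lemma det3_cycle (x y w : V3) : det3 x y w = det3 y w x := by unfold det3; ring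

lemma det3_swap_outer (x y w : V3) : det3 x y w = -det3 w y x := by unfold det3; ring

lemma det3_swap_right (x y w : V3) : det3 x y w = -det3 x w y := by unfold det3; ring

lemma det3_self_left (x y : V3) : det3 x x y = 0 := by unfold det3; ring

lemma det3_self_outer (x y : V3) : det3 x y x = 0 := by unfold det3; ring

lemma det3_self_right (x y : V3) : det3 x y y = 0 := by unfold det3; ring

def lorentzCross (x y : V3) : V3 :=
  ![x 1 * y 2 - x 2 * y 1, x 0 * y 2 - x 2 * y 0, x 1 * y 0 - x 0 * y 1]

lemma pscal_lorentzCross (x y w : V3) : pscal (lorentzCross x y) w = det3 x y w := by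
  simp only [pscal, det3, lorentzCross, Matrix.cons_val_zero, Matrix.cons_val_one,
    Matrix.cons_val_two, Matrix.head_cons, Matrix.tail_cons]
  ring

lemma pscal_lorentzCross_self (x y : V3) :
    pscal (lorentzCross x y) (lorentzCross x y) = pscal x x * pscal y y - pscal x y ^ 2 := by
  simp only [pscal, lorentzCross, Matrix.cons_val_zero, Matrix.cons_val_one,
    Matrix.cons_val_two, Matrix.head_cons, Matrix.tail_cons]
  ring

lemma pscal_add_left (x y w : V3) : pscal (x + y) w = pscal x w + pscal y w := by
  simp only [pscal, Pi.add_apply]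
  ring

lemma pscal_add_right (x y w : V3) : pscal x (y + w) = pscal x y + pscal x w := by
  simp only [pscal, Pi.add_apply]
  ring

lemma pscal_lorentzCross_left_self (x y : V3) : pscal x (lorentzCross x y) = 0 := by
  rw [pscal_comm, pscal_lorentzCross, det3_self_outer]

lemma pscal_lorentzCross_right_self (x y : V3) : pscal y (lorentzCross x y) = 0 := by
  rw [pscal_comm, pscal_lorentzCross, det3_self_right]

lemma gram_expansion (x y d : V3) (i : Fin 3) :
    pscal (lorentzCross x y) (lorentzCross x y) * d i =
      (pscal y y * pscal x d - pscal x y * pscal y d) * x i +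
        (pscal x x * pscal y d - pscal x y * pscal x d) * y i +
          det3 x y d * lorentzCross x y i := by
  fin_cases i <;>
  simp only [pscal, det3, lorentzCross, Fin.isValue, Matrix.cons_val_zero, Matrix.cons_val_one,
    Matrix.cons_val, Fin.zero_eta, Fin.mk_one, Fin.reduceFinMk] <;>
  ring

lemma one_le_pscal {x y : V3} (hx : x ∈ Hyp) (hy : y ∈ Hyp) : 1 ≤ pscal x y := by
  obtain ⟨hx1, hx0⟩ := hx
  obtain ⟨hy1, hy0⟩ := hy
  simp only [pscal] at *
  by_cases hB : 1 + x 1 * y 1 + x 2 * y 2 ≤ 0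
  · nlinarith [mul_pos hx0 hy0]
  · nlinarith [mul_pos hx0 hy0, sq_nonneg (x 1 - y 1), sq_nonneg (x 2 - y 2),
      sq_nonneg (x 1 * y 2 - x 2 * y 1)]

lemma pscal_eq_one_iff {x y : V3} (hx : x ∈ Hyp) (hy : y ∈ Hyp) : pscal x y = 1 ↔ x = y := by
  refine ⟨fun h => ?_, fun h => h ▸ hx.1⟩
  obtain ⟨hx1, hx0⟩ := hx
  obtain ⟨hy1, hy0⟩ := hy
  simp only [pscal] at *
  have hsq : (x 1 - y 1) ^ 2 + (x 2 - y 2) ^ 2 + (x 1 * y 2 - x 2 * y 1) ^ 2 = 0 := by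
    linear_combination (-(x 0 * x 0) + (x 0 * x 0 - x 1 * x 1 - x 2 * x 2 - 1)) * hy1
      - y 0 * y 0 * hx1 + (2 * x 0 * y 0 - (x 0 * y 0 - x 1 * y 1 - x 2 * y 2 - 1)) * h
  have e1 : x 1 = y 1 := by nlinarith [sq_nonneg (x 2 - y 2), sq_nonneg (x 1 * y 2 - x 2 * y 1)]
  have e2 : x 2 = y 2 := by nlinarith [sq_nonneg (x 1 - y 1), sq_nonneg (x 1 * y 2 - x 2 * y 1)]
  have e0 : x 0 = y 0 := by
    rw [e1, e2] at hx1
    nlinarith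
  funext i
  fin_cases i
  exacts [e0, e1, e2]

lemma one_lt_pscal {x y : V3} (hx : x ∈ Hyp) (hy : y ∈ Hyp) (hxy : x ≠ y) : 1 < pscal x y :=
  (one_le_pscal hx hy).lt_of_ne fun h => hxy ((pscal_eq_one_iff hx hy).1 h.symm)

lemma pscal_lorentzCross_self_neg {x y : V3} (hx : x ∈ Hyp) (hy : y ∈ Hyp) (hxy : x ≠ y) :
    pscal (lorentzCross x y) (lorentzCross x y) < 0 := by
  rw [pscal_lorentzCross_self, hx.1, hy.1]
  nlinarith [one_lt_pscal hx hy hxy]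

lemma mem_Hyp_of_pscal_pos {y p : V3} (hy : pscal y y = 1) (hp : p ∈ Hyp)
    (hyp : 0 < pscal y p) : y ∈ Hyp := by
  refine ⟨hy, ?_⟩
  obtain ⟨hp1, hp0⟩ := hp
  simp only [pscal] at *
  by_contra! h
  have h2 : y 0 * p 0 ≤ 0 := mul_nonpos_of_nonpos_of_nonneg h hp0.le
  have hprod : 0 < (y 0 * p 0 - (y 1 * p 1 + y 2 * p 2)) * (-(y 0 * p 0 + (y 1 * p 1 + y 2 * p 2))) :=
    mul_pos (by linarith) (by linarith)
  nlinarith [sq_nonneg (y 1 * p 2 - y 2 * p 1), sq_nonneg (y 0), sq_nonneg (p 1), sq_nonneg (p 2)]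

lemma dH_self {x : V3} (hx : x ∈ Hyp) : dH x x = 0 := by
  simp [dH, arcoshR, hx.1]

/-- A geodesic of `ℍ` meets a plane not through the origin in at most two points. -/
lemma eq_or_eq_of_det3_eq_zero {x y d u : V3} {p : ℝ} (hx : x ∈ Hyp) (hy : y ∈ Hyp)
    (hd : d ∈ Hyp) (hp : p ≠ 0) (hux : pscal u x = p) (huy : pscal u y = p)
    (hud : pscal u d = p) (hxy : x ≠ y) (hdet : det3 x y d = 0) : d = x ∨ d = y := by
  have hc : 1 < pscal x y := one_lt_pscal hx hy hxy
  have hgram : pscal (lorentzCross x y) (lorentzCross x y) = 1 - pscal x y ^ 2 := by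
    rw [pscal_lorentzCross_self, hx.1, hy.1]
    ring
  obtain ⟨s, t, hde⟩ : ∃ s t : ℝ, ∀ i, d i = s * x i + t * y i := by
    refine ⟨(pscal x d - pscal x y * pscal y d) / (1 - pscal x y ^ 2),
      (pscal y d - pscal x y * pscal x d) / (1 - pscal x y ^ 2), fun i => ?_⟩
    have := gram_expansion x y d i
    rw [hgram, hx.1, hy.1, hdet] at this
    rw [div_mul_eq_mul_div, div_mul_eq_mul_div, ← add_div, eq_div_iff (by nlinarith)]
    linear_combination this
  have hlin : ∀ v, pscal v d = s * pscal v x + t * pscal v y := by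
    intro v
    simp only [pscal, hde]
    ring
  have hst : s + t = 1 := by
    have := hlin u
    rw [hux, huy, hud] at this
    exact mul_right_cancel₀ hp (by linear_combination -this)
  have hst0 : s * t = 0 := by
    have hdd := hlin d
    rw [hd.1, pscal_comm d x, pscal_comm d y, hlin x, hlin y, hx.1, hy.1,
      pscal_comm y x] at hdd
    have : 2 * (pscal x y - 1) * (s * t) = 0 := by
      linear_combination -hdd - (s + t + 1) * hst
    simpa [show pscal x y - 1 ≠ 0 by linarith] using this
  rcases mul_eq_zero.1 hst0 with h | h
  · right
    funext i
    rw [hde i, h, show t = 1 by linarith]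
    ring
  · left
    funext i
    rw [hde i, h, show s = 1 by linarith]
    ring

def lorentzRefl (v x : V3) : V3 := fun i => x i - 2 * pscal x v / pscal v v * v i

section lorentzRefl

variable {v : V3} (hv : pscal v v ≠ 0)
include hv

lemma pscal_lorentzRefl (x y : V3) : pscal (lorentzRefl v x) (lorentzRefl v y) = pscal x y := by
  have hv' : v 0 ^ 2 - v 1 ^ 2 - v 2 ^ 2 ≠ 0 := by simpa [pscal, sq] using hv
  simp only [lorentzRefl, pscal]
  field_simp
  ring

lemma det3_lorentzRefl (x y w : V3) :
    det3 (lorentzRefl v x) (lorentzRefl v y) (lorentzRefl v w) = -det3 x y w := by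
  have hv' : v 0 ^ 2 - v 1 ^ 2 - v 2 ^ 2 ≠ 0 := by simpa [pscal, sq] using hv
  simp only [lorentzRefl, det3, pscal]
  field_simp
  ring

end lorentzRefl

lemma lorentzRefl_of_pscal_eq_zero {v x : V3} (h : pscal x v = 0) : lorentzRefl v x = x := by
  funext i
  simp [lorentzRefl, h]

lemma det3_lorentzRefl_left (v x y w : V3) :
    det3 (lorentzRefl v x) y w = det3 x y w - 2 * pscal x v / pscal v v * det3 v y w := by
  simp only [lorentzRefl, det3]
  ring

structure IsRotationAbout (c : V3) (M : V3 → V3) : Prop where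
  pscal_map : ∀ x y, pscal (M x) (M y) = pscal x y
  det3_map : ∀ x y w, det3 (M x) (M y) (M w) = det3 x y w
  map_center : M c = c

namespace IsRotationAbout

variable {c : V3} {M : V3 → V3}

lemma mem_Hyp (hM : IsRotationAbout c M) (hc : c ∈ Hyp) {x : V3} (hx : x ∈ Hyp) :
    M x ∈ Hyp :=
  mem_Hyp_of_pscal_pos ((hM.pscal_map x x).trans hx.1) hc <| by
    rw [← hM.map_center, hM.pscal_map]
    linarith [one_le_pscal hx hc]

lemma triArea_map (hM : IsRotationAbout c M) (a b d : V3) :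
    triArea (M a) (M b) (M d) = triArea a b d := by
  simp only [triArea, hM.pscal_map, hM.det3_map]

end IsRotationAbout

lemma isRotationAbout_lorentzRefl_comp {c v w : V3} (hv : pscal v v ≠ 0) (hw : pscal w w ≠ 0)
    (hcv : pscal c v = 0) (hcw : pscal c w = 0) :
    IsRotationAbout c (lorentzRefl v ∘ lorentzRefl w) where
  pscal_map x y := by simp only [Function.comp, pscal_lorentzRefl hv, pscal_lorentzRefl hw]
  det3_map x y d := by simp only [Function.comp, det3_lorentzRefl hv, det3_lorentzRefl hw, neg_neg]
  map_center := by
    simp only [Function.comp, lorentzRefl_of_pscal_eq_zero hcw, lorentzRefl_of_pscal_eq_zero hcv]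

lemma exists_rotation_det3_neg {c x : V3} (hc : c ∈ Hyp) (hx : x ∈ Hyp) (hcx : c ≠ x) :
    ∃ M, IsRotationAbout c M ∧ det3 (M x) c x < 0 := by
  set v := lorentzCross c x
  set w := lorentzCross c v
  have hN : pscal v v < 0 := pscal_lorentzCross_self_neg hc hx hcx
  have hcv : pscal c v = 0 := pscal_lorentzCross_left_self c x
  have hcw : pscal c w = 0 := pscal_lorentzCross_left_self c v
  have hvw : pscal v w = 0 := pscal_lorentzCross_right_self c v
  have hww : pscal w w = pscal v v := by
    rw [pscal_lorentzCross_self, hc.1, hcv]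
    ring
  have hxw : pscal x w = -pscal v v := by
    rw [pscal_comm, pscal_lorentzCross, det3_swap_right, ← pscal_lorentzCross]
  have hvwvw : pscal (v + w) (v + w) = 2 * pscal v v := by
    rw [pscal_add_left, pscal_add_right, pscal_add_right, pscal_comm w v, hvw, hww]
    ring
  refine ⟨lorentzRefl (v + w) ∘ lorentzRefl v,
    isRotationAbout_lorentzRefl_comp (by linarith) hN.ne
      (by rw [pscal_add_right, hcv, hcw, add_zero]) hcv, ?_⟩
  have hdet : det3 (v + w) c x = pscal v v := by
    rw [det3_cycle, ← pscal_lorentzCross, pscal_add_right, hvw, add_zero]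
  have hxv : pscal x v = 0 := pscal_lorentzCross_right_self c x
  rw [Function.comp_apply, lorentzRefl_of_pscal_eq_zero hxv, det3_lorentzRefl_left,
    det3_self_outer, pscal_add_right, hxv, hxw, hdet, hvwvw]
  field_simp [hN.ne]
  linarith

lemma triArea_lorentzRefl {v : V3} (hv : pscal v v ≠ 0) (a b d : V3) :
    triArea (lorentzRefl v a) (lorentzRefl v b) (lorentzRefl v d) = -triArea a b d := by
  simp only [triArea, pscal_lorentzRefl hv, det3_lorentzRefl hv, neg_div, Real.arctan_neg]
  ring

lemma exists_rotation_flip {c x y : V3} (hc : c ∈ Hyp) (hx : x ∈ Hyp) (hy : y ∈ Hyp)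
    (hcx : c ≠ x) (hcy : c ≠ y) :
    ∃ M, IsRotationAbout c M ∧ pscal (M y) x = pscal y x ∧
      triArea c (M y) x = -triArea c y x := by
  set R := lorentzRefl (lorentzCross c x)
  have hN := (pscal_lorentzCross_self_neg hc hx hcx).ne
  have hRc : R c = c := lorentzRefl_of_pscal_eq_zero (pscal_lorentzCross_left_self c x)
  have hRx : R x = x := lorentzRefl_of_pscal_eq_zero (pscal_lorentzCross_right_self c x)
  refine ⟨R ∘ lorentzRefl (lorentzCross c y),
    isRotationAbout_lorentzRefl_comp hN (pscal_lorentzCross_self_neg hc hy hcy).ne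
      (pscal_lorentzCross_left_self c x) (pscal_lorentzCross_left_self c y), ?_⟩
  simp only [Function.comp, lorentzRefl_of_pscal_eq_zero (pscal_lorentzCross_right_self c y)]
  constructor
  · conv_lhs => rw [← hRx]
    exact pscal_lorentzRefl hN y x
  · conv_lhs => rw [← hRc, ← hRx]
    exact triArea_lorentzRefl hN c y x

/-- `(1 + x₀)(1 + y₀)(1 - ζₓ ζ̄ᵧ)`, where `ζₓ = (x₁ + i x₂)/(1 + x₀)` is the image of `x` in the
Poincaré disk. -/
def diskFactor (x y : V3) : ℂ :=
  ⟨(1 + x 0) * (1 + y 0) - (x 1 * y 1 + x 2 * y 2), x 1 * y 2 - x 2 * y 1⟩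

def triComplex (a b c : V3) : ℂ := ⟨pscal a b + pscal b c + pscal c a + 1, det3 a b c⟩

lemma diskFactor_swap (x y : V3) : diskFactor y x = starRingEnd ℂ (diskFactor x y) := by
  apply Complex.ext <;> simp only [diskFactor, Complex.conj_re, Complex.conj_im] <;> ring

lemma triComplex_cycle (a b c : V3) : triComplex a b c = triComplex b c a := by
  apply Complex.ext
  · simp only [triComplex]
    ring
  · exact det3_cycle a b c

section Hyp

variable {a b c d : V3} (ha : a ∈ Hyp) (hb : b ∈ Hyp) (hc : c ∈ Hyp)
include ha hb hc

lemma exists_pos_mul_triComplex_eq : ∃ r : ℝ, 0 < r ∧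
    (r : ℂ) * triComplex a b c = diskFactor a b * diskFactor b c * diskFactor c a := by
  have hr : ∀ {x : V3}, x ∈ Hyp → 0 < 1 + x 0 := fun hx => by linarith [hx.2]
  refine ⟨2 * (1 + a 0) * (1 + b 0) * (1 + c 0),
    mul_pos (mul_pos (mul_pos two_pos (hr ha)) (hr hb)) (hr hc), ?_⟩
  have ha1 := ha.1
  have hb1 := hb.1
  have hc1 := hc.1
  unfold pscal at ha1 hb1 hc1
  apply Complex.ext <;>
  simp only [Complex.mul_re, Complex.mul_im, Complex.ofReal_re, Complex.ofReal_im, diskFactor,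
    triComplex, pscal, det3] <;>
  grind

lemma re_triComplex_pos : 0 < (triComplex a b c).re := by
  simp only [triComplex]
  linarith [one_le_pscal ha hb, one_le_pscal hb hc, one_le_pscal hc ha]

lemma abs_arg_triComplex_lt : |(triComplex a b c).arg| < π / 2 :=
  Complex.abs_arg_lt_pi_div_two_iff.2 (Or.inl (re_triComplex_pos ha hb hc))

lemma triArea_eq_two_mul_arg : triArea a b c = 2 * (triComplex a b c).arg := by
  obtain ⟨h₁, h₂⟩ := abs_lt.1 (abs_arg_triComplex_lt ha hb hc)
  rw [triArea, ← Real.arctan_tan h₁ h₂, Complex.tan_arg]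
  rfl

lemma triArea_nonneg_iff : 0 ≤ triArea a b c ↔ 0 ≤ det3 a b c := by
  have hD : 0 < pscal a b + pscal b c + pscal c a + 1 := re_triComplex_pos ha hb hc
  rw [triArea, mul_nonneg_iff_of_pos_left two_pos, Real.arctan_nonneg, le_div_iff₀ hD, zero_mul]

lemma triComplex_ne_zero : triComplex a b c ≠ 0 :=
  fun h => (re_triComplex_pos ha hb hc).ne' (by rw [h, Complex.zero_re])

variable (hd : d ∈ Hyp)
include hd

lemma arg_triComplex_mul_triComplex :
    (triComplex a b c * triComplex a c d).arg =
      (diskFactor a b * diskFactor b c * diskFactor c d * diskFactor d a).arg := by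
  obtain ⟨r₁, hr₁, h₁⟩ := exists_pos_mul_triComplex_eq ha hb hc
  obtain ⟨r₂, hr₂, h₂⟩ := exists_pos_mul_triComplex_eq ha hc hd
  have hac : diskFactor a c ≠ 0 := by
    have := h₂ ▸ mul_ne_zero (Complex.ofReal_ne_zero.2 hr₂.ne') (triComplex_ne_zero ha hc hd)
    exact left_ne_zero_of_mul (left_ne_zero_of_mul this)
  have h₃ : diskFactor c a * diskFactor a c = (Complex.normSq (diskFactor a c) : ℂ) := by
    rw [diskFactor_swap, mul_comm, Complex.mul_conj]
  have key : ((r₁ * r₂ : ℝ) : ℂ) * (triComplex a b c * triComplex a c d) =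
      (Complex.normSq (diskFactor a c) : ℂ) *
        (diskFactor a b * diskFactor b c * diskFactor c d * diskFactor d a) := by
    push_cast
    linear_combination (r₂ * triComplex a c d) * h₁ +
      diskFactor a b * diskFactor b c * diskFactor c a * h₂ +
      diskFactor a b * diskFactor b c * diskFactor c d * diskFactor d a * h₃
  rw [← Complex.arg_real_mul _ (mul_pos hr₁ hr₂), key,
    Complex.arg_real_mul _ (Complex.normSq_pos.2 hac)]

lemma triArea_add_triArea : triArea a b c + triArea a c d = triArea a b d + triArea b c d := by
  have hangle : (((triComplex a b c).arg + (triComplex a c d).arg : ℝ) : Real.Angle) =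
      ((triComplex a b d).arg + (triComplex b c d).arg : ℝ) := by
    rw [Real.Angle.coe_add, Real.Angle.coe_add, ← Complex.arg_mul_coe_angle
      (triComplex_ne_zero ha hb hc) (triComplex_ne_zero ha hc hd), add_comm,
      triComplex_cycle a b d, ← Complex.arg_mul_coe_angle (triComplex_ne_zero hb hc hd)
      (triComplex_ne_zero hb hd ha), arg_triComplex_mul_triComplex ha hb hc hd,
      arg_triComplex_mul_triComplex hb hc hd ha]
    ring_nf
  have hlift : ∀ s t : ℝ, |s| < π / 2 → |t| < π / 2 → ((s + t : ℝ) : Real.Angle).toReal = s + t :=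
    fun s t hs ht => Real.Angle.toReal_coe_eq_self_iff.2 <| by
      constructor <;> linarith [abs_lt.1 hs, abs_lt.1 ht]
  have := congrArg Real.Angle.toReal hangle
  rw [hlift _ _ (abs_arg_triComplex_lt ha hb hc) (abs_arg_triComplex_lt ha hc hd),
    hlift _ _ (abs_arg_triComplex_lt ha hb hd) (abs_arg_triComplex_lt hb hc hd)] at this
  rw [triArea_eq_two_mul_arg ha hb hc, triArea_eq_two_mul_arg ha hc hd,
    triArea_eq_two_mul_arg ha hb hd, triArea_eq_two_mul_arg hb hc hd]
  linarith

end Hyp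

lemma triArea_self_left (a b : V3) : triArea a a b = 0 := by
  simp [triArea, det3_self_left]

lemma triArea_self_outer (a b : V3) : triArea a b a = 0 := by
  simp [triArea, det3_self_outer]

/-- The cyclic relabelling `k ↦ k + s` of `1, …, n`. -/
def cycShift (n s k : ℕ) : ℕ := (k - 1 + s) % n + 1

lemma cycShift_mem {n : ℕ} (hn : 0 < n) (s k : ℕ) : cycShift n s k ∈ Icc 1 n := by
  have := Nat.mod_lt (k - 1 + s) hn
  simp only [cycShift, mem_Icc]
  omega

lemma nxt_mem {n : ℕ} (hn : 0 < n) (k : ℕ) : nxt n k ∈ Icc 1 n := by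
  have := Nat.mod_lt k hn
  simp only [nxt, mem_Icc]
  omega

lemma nxt_of_lt {n k : ℕ} (h : k < n) : nxt n k = k + 1 := by
  simp [nxt, Nat.mod_eq_of_lt h]

lemma nxt_self (n : ℕ) : nxt n n = 1 := by
  simp [nxt]

lemma cycShift_cycShift (n s t k : ℕ) :
    cycShift n t (cycShift n s k) = cycShift n (s + t) k := by
  simp only [cycShift, Nat.add_sub_cancel, Nat.mod_add_mod, Nat.add_assoc]

lemma cycShift_self {n k : ℕ} (hk : k ∈ Icc 1 n) : cycShift n n k = k := by
  rw [mem_Icc] at hk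
  rw [cycShift, Nat.add_mod_right, Nat.mod_eq_of_lt (by omega)]
  omega

lemma cycShift_last {n s : ℕ} (hs : s ∈ Icc 1 n) : cycShift n s n = s := by
  rw [mem_Icc] at hs
  rw [cycShift, show n - 1 + s = s - 1 + n by omega, Nat.add_mod_right,
    Nat.mod_eq_of_lt (by omega)]
  omega

lemma nxt_eq_cycShift_one {n k : ℕ} (hk : 1 ≤ k) : nxt n k = cycShift n 1 k := by
  rw [nxt, cycShift, Nat.sub_add_cancel hk]

lemma cycShift_nxt {n k : ℕ} (s : ℕ) (hk : 1 ≤ k) :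
    cycShift n s (nxt n k) = nxt n (cycShift n s k) := by
  rw [nxt_eq_cycShift_one hk, nxt_eq_cycShift_one (by simp [cycShift]), cycShift_cycShift,
    cycShift_cycShift, add_comm]

lemma cycShift_cycShift_sub {n s k : ℕ} (hs : s ≤ n) (hk : k ∈ Icc 1 n) :
    cycShift n s (cycShift n (n - s) k) = k := by
  rw [cycShift_cycShift, Nat.sub_add_cancel hs, cycShift_self hk]

lemma sum_comp_cycShift {n s : ℕ} (hn : 0 < n) (hs : s ≤ n) (g : ℕ → ℝ) :
    ∑ k ∈ Icc 1 n, g (cycShift n s k) = ∑ k ∈ Icc 1 n, g k :=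
  sum_nbij' (cycShift n s) (cycShift n (n - s)) (fun _ _ => cycShift_mem hn _ _)
    (fun _ _ => cycShift_mem hn _ _)
    (fun _ hk => by rw [cycShift_cycShift, Nat.add_sub_cancel' hs, cycShift_self hk])
    (fun _ hk => cycShift_cycShift_sub hs hk) fun _ _ => rfl

lemma sum_comp_nxt {n : ℕ} (hn : 0 < n) (g : ℕ → ℝ) :
    ∑ k ∈ Icc 1 n, g (nxt n k) = ∑ k ∈ Icc 1 n, g k := by
  rw [← sum_comp_cycShift hn (Nat.one_le_of_lt hn) g]
  exact sum_congr rfl fun k hk => by rw [nxt_eq_cycShift_one (mem_Icc.1 hk).1]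

def fanArea (p : V3) (n : ℕ) (z : ℕ → V3) : ℝ :=
  ∑ k ∈ Icc 1 n, triArea p (z k) (z (nxt n k))

lemma polyArea_eq_fanArea {n : ℕ} (hn : 2 ≤ n) (z : ℕ → V3) :
    polyArea n z = fanArea (z 1) n z := by
  have h₁ : Icc 1 n = insert 1 (insert n (Ico 2 n)) := by
    ext m
    simp only [mem_Icc, mem_insert, mem_Ico]
    omega
  rw [fanArea, h₁, sum_insert (by simp; omega), sum_insert (by simp), triArea_self_left, nxt_self,
    triArea_self_outer, polyArea, zero_add, zero_add]
  exact sum_congr rfl fun k hk => by rw [nxt_of_lt (mem_Ico.1 hk).2]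

lemma fanArea_eq_fanArea {n : ℕ} (hn : 0 < n) {z : ℕ → V3} (hz : ∀ k ∈ Icc 1 n, z k ∈ Hyp)
    {p q : V3} (hp : p ∈ Hyp) (hq : q ∈ Hyp) : fanArea p n z = fanArea q n z := by
  have hdiff : fanArea p n z - fanArea q n z =
      ∑ k ∈ Icc 1 n, triArea p q (z (nxt n k)) - ∑ k ∈ Icc 1 n, triArea p q (z k) := by
    rw [fanArea, fanArea, ← sum_sub_distrib, ← sum_sub_distrib]
    refine sum_congr rfl fun k hk => ?_
    linarith [triArea_add_triArea hp hq (hz k hk) (hz _ (nxt_mem hn k))]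
  rw [sum_comp_nxt hn fun k => triArea p q (z k), sub_self] at hdiff
  linarith

lemma polyArea_comp_cycShift {n : ℕ} (hn : 2 ≤ n) {z : ℕ → V3}
    (hz : ∀ k ∈ Icc 1 n, z k ∈ Hyp) {s : ℕ} (hs : s ≤ n) :
    polyArea n (z ∘ cycShift n s) = polyArea n z := by
  have hn0 : 0 < n := by omega
  have h1 : 1 ∈ Icc 1 n := mem_Icc.2 ⟨le_rfl, by omega⟩
  rw [polyArea_eq_fanArea hn, polyArea_eq_fanArea hn, Function.comp_apply,
    fanArea_eq_fanArea (z := z ∘ cycShift n s) hn0 (fun k _ => hz _ (cycShift_mem hn0 s k))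
      (hz _ (cycShift_mem hn0 s 1)) (hz 1 h1), fanArea, fanArea]
  refine (sum_congr rfl fun k hk => ?_).trans
    (sum_comp_cycShift hn0 hs fun m => triArea (z 1) (z m) (z (nxt n m)))
  rw [Function.comp_apply, Function.comp_apply, cycShift_nxt s (mem_Icc.1 hk).1]

def SameSides (n : ℕ) (w z : ℕ → V3) : Prop :=
  ∀ k ∈ Icc 1 n, dH (w k) (w (nxt n k)) = dH (z k) (z (nxt n k))

def IsMaxPolygon (n : ℕ) (z : ℕ → V3) : Prop :=
  ∀ w : ℕ → V3, (∀ k ∈ Icc 1 n, w k ∈ Hyp) → SameSides n w z → polyArea n w ≤ polyArea n z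

lemma IsMaxPolygon.of_sameSides {n : ℕ} {z w : ℕ → V3} (hmax : IsMaxPolygon n z)
    (hwz : SameSides n w z) (harea : polyArea n w = polyArea n z) : IsMaxPolygon n w :=
  fun v hv hvw => harea ▸ hmax v hv fun k hk => (hvw k hk).trans (hwz k hk)

lemma IsMaxPolygon.comp_cycShift {n : ℕ} (hn : 2 ≤ n) {z : ℕ → V3}
    (hz : ∀ k ∈ Icc 1 n, z k ∈ Hyp) (hmax : IsMaxPolygon n z) {s : ℕ} (hs : s ≤ n) :
    IsMaxPolygon n (z ∘ cycShift n s) := by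
  have hn0 : 0 < n := by omega
  intro w hw hwz
  have hsides : SameSides n (w ∘ cycShift n (n - s)) z := by
    intro k hk
    have hk' := cycShift_mem hn0 (n - s) k
    have := hwz _ hk'
    simp only [Function.comp_apply, cycShift_nxt _ (mem_Icc.1 hk).1,
      cycShift_nxt _ (mem_Icc.1 hk').1, cycShift_cycShift_sub hs hk] at this ⊢
    exact this
  have := hmax (w ∘ cycShift n (n - s)) (fun k _ => hw _ (cycShift_mem hn0 _ k)) hsides
  rwa [polyArea_comp_cycShift hn hw (Nat.sub_le n s), ← polyArea_comp_cycShift hn hz hs] at this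

def bend (M : V3 → V3) (b : ℕ) (z : ℕ → V3) (k : ℕ) : V3 := if k ≤ b then M (z k) else z k

lemma bend_mem_Hyp {n b : ℕ} {z : ℕ → V3} {M : V3 → V3} (hM : IsRotationAbout (z n) M)
    (hz : ∀ k ∈ Icc 1 n, z k ∈ Hyp) : ∀ k ∈ Icc 1 n, bend M b z k ∈ Hyp := by
  intro k hk
  unfold bend
  split_ifs
  exacts [hM.mem_Hyp (hz n (mem_Icc.2 ⟨(mem_Icc.1 hk).1.trans (mem_Icc.1 hk).2, le_rfl⟩))
    (hz k hk), hz k hk]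

section bend

variable {n b : ℕ} {z : ℕ → V3} {M : V3 → V3} (hM : IsRotationAbout (z n) M)
  (hb : 1 ≤ b) (hbn : b < n)
include hM hb hbn

lemma bend_edge {k : ℕ} (hk : k ∈ Icc 1 n) (hkb : k ≠ b) :
    (bend M b z k = M (z k) ∧ bend M b z (nxt n k) = M (z (nxt n k))) ∨
      (bend M b z k = z k ∧ bend M b z (nxt n k) = z (nxt n k)) := by
  rw [mem_Icc] at hk
  rcases hk.2.lt_or_eq with hkn | rfl
  · rw [nxt_of_lt hkn]
    rcases lt_or_gt_of_ne hkb with hlt | hgt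
    · left
      simp [bend, hlt.le, Nat.succ_le_of_lt hlt]
    · right
      simp [bend, show ¬k ≤ b by omega, show ¬k + 1 ≤ b by omega]
  · left
    simp [bend, nxt_self, hb, hM.map_center]

lemma sameSides_bend (hMb : pscal (M (z b)) (z (b + 1)) = pscal (z b) (z (b + 1))) :
    SameSides n (bend M b z) z := by
  intro k hk
  by_cases hkb : k = b
  · subst hkb
    simp [bend, nxt_of_lt hbn, dH, hMb]
  · rcases bend_edge hM hb hbn hk hkb with ⟨h₁, h₂⟩ | ⟨h₁, h₂⟩ <;> rw [h₁, h₂]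
    simp only [dH, hM.pscal_map]

lemma polyArea_bend (hz : ∀ k ∈ Icc 1 n, z k ∈ Hyp) :
    polyArea n (bend M b z) =
      polyArea n z + (triArea (z n) (M (z b)) (z (b + 1)) - triArea (z n) (z b) (z (b + 1))) := by
  have hn : 2 ≤ n := by omega
  have hzn : z n ∈ Hyp := hz n (mem_Icc.2 ⟨by omega, le_rfl⟩)
  have hw := bend_mem_Hyp (b := b) hM hz
  have h1 : 1 ∈ Icc 1 n := mem_Icc.2 ⟨le_rfl, by omega⟩
  rw [polyArea_eq_fanArea hn, polyArea_eq_fanArea hn,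
    fanArea_eq_fanArea (by omega) hw (hw 1 h1) hzn, fanArea_eq_fanArea (by omega) hz (hz 1 h1) hzn,
    ← sub_eq_iff_eq_add', fanArea, fanArea, ← sum_sub_distrib,
    sum_eq_single_of_mem b (mem_Icc.2 ⟨hb, hbn.le⟩)]
  · simp [bend, nxt_of_lt hbn]
  · intro k hk hkb
    rcases bend_edge hM hb hbn hk hkb with ⟨h₁, h₂⟩ | ⟨h₁, h₂⟩ <;> rw [h₁, h₂]
    · rw [sub_eq_zero]
      conv_lhs => rw [← hM.map_center]
      exact hM.triArea_map _ _ _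
    · exact sub_self _

end bend

lemma IsMaxPolygon.det3_last_nonneg {n : ℕ} {z : ℕ → V3} (hmax : IsMaxPolygon n z)
    (hz : ∀ k ∈ Icc 1 n, z k ∈ Hyp) {b : ℕ} (hb : 1 ≤ b) (hbn : b < n) :
    0 ≤ det3 (z n) (z b) (z (b + 1)) := by
  by_cases h₁ : z n = z b
  · rw [h₁, det3_self_left]
  by_cases h₂ : z n = z (b + 1)
  · rw [h₂, det3_self_outer]
  have hzn := hz n (mem_Icc.2 ⟨by omega, le_rfl⟩)
  have hzb := hz b (mem_Icc.2 ⟨hb, hbn.le⟩)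
  have hzb' := hz (b + 1) (mem_Icc.2 ⟨by omega, hbn⟩)
  obtain ⟨M, hM, hMb, hflip⟩ := exists_rotation_flip hzn hzb' hzb h₂ h₁
  have := hmax _ (bend_mem_Hyp hM hz) (sameSides_bend hM hb hbn hMb)
  rw [polyArea_bend hM hb hbn hz, hflip] at this
  exact (triArea_nonneg_iff hzn hzb hzb').1 (by linarith)

lemma IsMaxPolygon.det3_nonneg {n : ℕ} {z : ℕ → V3} (hmax : IsMaxPolygon n z)
    (hz : ∀ k ∈ Icc 1 n, z k ∈ Hyp) {a b : ℕ} (ha : a ∈ Icc 1 n) (hb : b ∈ Icc 1 n) :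
    0 ≤ det3 (z b) (z (nxt n b)) (z a) := by
  rcases eq_or_ne a b with rfl | hab
  · rw [det3_self_outer]
  rw [mem_Icc] at ha hb
  have hn : 2 ≤ n := by omega
  set b' := cycShift n (n - a) b
  have hb'b : cycShift n a b' = b := cycShift_cycShift_sub ha.2 (mem_Icc.2 hb)
  have hb' : 1 ≤ b' ∧ b' ≤ n := mem_Icc.1 (cycShift_mem (by omega) (n - a) b)
  have hb'n : b' < n := hb'.2.lt_of_ne fun h => hab <| by
    rw [← hb'b, h, cycShift_last (mem_Icc.2 ha)]
  have := (hmax.comp_cycShift hn hz ha.2).det3_last_nonneg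
    (fun k _ => hz _ (cycShift_mem (by omega) a k)) hb'.1 hb'n
  rwa [Function.comp_apply, Function.comp_apply, Function.comp_apply, cycShift_last (mem_Icc.2 ha),
    hb'b, ← nxt_of_lt hb'n, cycShift_nxt a hb'.1, hb'b, det3_cycle] at this

lemma eq_or_eq_of_det3_eq_zero_of_cocyc {n : ℕ} {z : ℕ → V3} (hz : ∀ k ∈ Icc 1 n, z k ∈ Hyp)
    (hcyc : Cocyc (z '' Set.Icc 1 n)) {i j k : ℕ} (hi : i ∈ Icc 1 n) (hj : j ∈ Icc 1 n)
    (hk : k ∈ Icc 1 n) (hij : z i ≠ z j) (hdet : det3 (z i) (z j) (z k) = 0) :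
    z k = z i ∨ z k = z j := by
  obtain ⟨u, p, -, hp, hplane⟩ := hcyc
  have hu : ∀ m ∈ Icc 1 n, pscal u (z m) = p := fun m hm =>
    hplane _ (Set.mem_image_of_mem z (mem_Icc.1 hm))
  exact eq_or_eq_of_det3_eq_zero (hz i hi) (hz j hj) (hz k hk) hp (hu i hi) (hu j hj) (hu k hk)
    hij hdet

lemma ne_nxt_of_dH_pos {n : ℕ} {z : ℕ → V3} (hz : ∀ k ∈ Icc 1 n, z k ∈ Hyp)
    (hpos : ∀ k ∈ Icc 1 n, 0 < dH (z k) (z (nxt n k))) : ∀ k ∈ Icc 1 n, z k ≠ z (nxt n k) :=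
  fun k hk h => (hpos k hk).ne' (h ▸ dH_self (hz _ hk))

lemma IsMaxPolygon.pred_eq_of_pinch {n : ℕ} {z : ℕ → V3} (hmax : IsMaxPolygon n z)
    (hz : ∀ k ∈ Icc 1 n, z k ∈ Hyp) (hside : ∀ k ∈ Icc 1 n, z k ≠ z (nxt n k))
    (hcyc : Cocyc (z '' Set.Icc 1 n)) {j : ℕ} (hj : 2 ≤ j) (hjn : j < n) (heq : z n = z j) :
    z (j - 1) = z (n - 1) := by
  have hmem : ∀ {k}, 1 ≤ k → k ≤ n → k ∈ Icc 1 n := fun h₁ h₂ => mem_Icc.2 ⟨h₁, h₂⟩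
  have hj' := hmem (k := j - 1) (by omega) (by omega)
  have hn' := hmem (k := n - 1) (by omega) (by omega)
  have hnxt_j : nxt n (j - 1) = j := by rw [nxt_of_lt (by omega), Nat.sub_add_cancel (by omega)]
  have hnxt_n : nxt n (n - 1) = n := by rw [nxt_of_lt (by omega), Nat.sub_add_cancel (by omega)]
  have h₁ := hmax.det3_nonneg hz hj' hn'
  have h₂ := hmax.det3_nonneg hz hn' hj'
  rw [hnxt_n] at h₁
  rw [hnxt_j, ← heq, det3_swap_outer] at h₂
  have hsn := hside _ hn'
  rw [hnxt_n] at hsn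
  refine (eq_or_eq_of_det3_eq_zero_of_cocyc hz hcyc hn' (hmem (by omega) le_rfl) hj' hsn
    (by linarith)).resolve_right fun h => hside _ hj' ?_
  rw [hnxt_j, h, heq]

lemma IsMaxPolygon.pred_ne_of_pinch {n : ℕ} {z : ℕ → V3} (hmax : IsMaxPolygon n z)
    (hz : ∀ k ∈ Icc 1 n, z k ∈ Hyp) {j : ℕ} (hj : 2 ≤ j) (hjn : j < n) (heq : z n = z j)
    (hxn : z n ≠ z (n - 1)) : z (j - 1) ≠ z (n - 1) := by
  intro hprev
  have hmem : ∀ {k}, 1 ≤ k → k ≤ n → k ∈ Icc 1 n := fun h₁ h₂ => mem_Icc.2 ⟨h₁, h₂⟩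
  obtain ⟨M, hM, hdet⟩ := exists_rotation_det3_neg (hz n (hmem (by omega) le_rfl))
    (hz (n - 1) (hmem (by omega) (by omega))) hxn
  have hb : 1 ≤ j - 1 := by omega
  have hbn : j - 1 < n := by omega
  have hj1 : j - 1 + 1 = j := Nat.sub_add_cancel (by omega)
  have hMb : pscal (M (z (j - 1))) (z (j - 1 + 1)) = pscal (z (j - 1)) (z (j - 1 + 1)) := by
    rw [hj1, ← heq, ← hM.map_center, hM.pscal_map, hM.map_center]
  have harea : polyArea n (bend M (j - 1) z) = polyArea n z := by
    rw [polyArea_bend hM hb hbn hz, hj1, ← heq, triArea_self_outer, triArea_self_outer, sub_self,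
      add_zero]
  have := (hmax.of_sameSides (sameSides_bend hM hb hbn hMb) harea).det3_nonneg
    (bend_mem_Hyp hM hz) (hmem (k := n - 1) (by omega) (by omega)) (hmem hb hbn.le)
  rw [nxt_of_lt hbn, hj1] at this
  simp only [bend, le_rfl, if_true, show ¬j ≤ j - 1 by omega, show ¬n - 1 ≤ j - 1 by omega,
    if_false, ← heq, hprev] at this
  linarith

lemma IsMaxPolygon.last_ne {n : ℕ} {z : ℕ → V3} (hmax : IsMaxPolygon n z)
    (hz : ∀ k ∈ Icc 1 n, z k ∈ Hyp) (hside : ∀ k ∈ Icc 1 n, z k ≠ z (nxt n k))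
    (hcyc : Cocyc (z '' Set.Icc 1 n)) {j : ℕ} (hj : j ∈ Icc 1 n) (hjn : j ≠ n) :
    z n ≠ z j := by
  intro heq
  rw [mem_Icc] at hj
  have hj2 : 2 ≤ j := by
    by_contra! h
    have := hside n (mem_Icc.2 ⟨by omega, le_rfl⟩)
    rw [nxt_self, show 1 = j by omega] at this
    exact this heq
  have hlast := hside (n - 1) (mem_Icc.2 ⟨by omega, by omega⟩)
  rw [nxt_of_lt (by omega), Nat.sub_add_cancel (by omega)] at hlast
  exact hmax.pred_ne_of_pinch hz hj2 (by omega) heq (Ne.symm hlast)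
    (hmax.pred_eq_of_pinch hz hside hcyc hj2 (by omega) heq)

lemma IsMaxPolygon.injOn {n : ℕ} {z : ℕ → V3} (hmax : IsMaxPolygon n z)
    (hz : ∀ k ∈ Icc 1 n, z k ∈ Hyp) (hside : ∀ k ∈ Icc 1 n, z k ≠ z (nxt n k))
    (hcyc : Cocyc (z '' Set.Icc 1 n)) : Set.InjOn z (Icc 1 n : Set ℕ) := by
  intro i hi j hj heq
  by_contra hij
  rw [coe_Icc, Set.mem_Icc] at hi hj
  have hn : 2 ≤ n := by omega
  have hn0 : 0 < n := by omega
  have hz' : ∀ k ∈ Icc 1 n, (z ∘ cycShift n i) k ∈ Hyp := fun k _ => hz _ (cycShift_mem hn0 i k)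
  have hside' : ∀ k ∈ Icc 1 n, (z ∘ cycShift n i) k ≠ (z ∘ cycShift n i) (nxt n k) :=
    fun k hk => by
      simpa only [Function.comp_apply, cycShift_nxt i (mem_Icc.1 hk).1] using
        hside _ (cycShift_mem hn0 i k)
  have hcyc' : Cocyc ((z ∘ cycShift n i) '' Set.Icc 1 n) := by
    obtain ⟨u, p, hu, hp, hplane⟩ := hcyc
    refine ⟨u, p, hu, hp, ?_⟩
    rintro _ ⟨k, -, rfl⟩
    exact hplane _ ⟨_, mem_Icc.1 (cycShift_mem hn0 i k), rfl⟩
  have hj' := cycShift_mem hn0 (n - i) j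
  have hjj : cycShift n i (cycShift n (n - i) j) = j := cycShift_cycShift_sub hi.2 (mem_Icc.2 hj)
  refine (hmax.comp_cycShift hn hz hi.2).last_ne hz' hside' hcyc' hj' (fun h => hij ?_) ?_
  · rw [← hjj, h, cycShift_last (mem_Icc.2 hi)]
  · simp only [Function.comp_apply, cycShift_last (mem_Icc.2 hi), hjj, heq]

theorem maximal_cocyclic_is_oriented_convex_general (n : ℕ) (z : ℕ → V3)
    (hz : ∀ k ∈ Finset.Icc 1 n, z k ∈ Hyp)
    (hpos : ∀ k ∈ Finset.Icc 1 n, 0 < dH (z k) (z (nxt n k)))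
    (hcyc : Cocyc (z '' Set.Icc 1 n))
    (hmax : ∀ w : ℕ → V3, (∀ k ∈ Finset.Icc 1 n, w k ∈ Hyp) →
      (∀ k ∈ Finset.Icc 1 n, dH (w k) (w (nxt n k)) = dH (z k) (z (nxt n k))) →
      polyArea n w ≤ polyArea n z) :
    OrientedConvex n z := by
  have hmax : IsMaxPolygon n z := hmax
  intro k hk j hj hjk hjnk
  have hnk : nxt n k ∈ Icc 1 n := nxt_mem (by have := mem_Icc.1 hk; omega) k
  refine (hmax.det3_nonneg hz hj hk).lt_of_ne' fun hdet => ?_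
  have hside := ne_nxt_of_dH_pos hz hpos
  have hinj := hmax.injOn hz hside hcyc
  rcases eq_or_eq_of_det3_eq_zero_of_cocyc hz hcyc hk hnk hj (hside k hk) hdet with h | h
  · exact hjk (hinj hj hk h)
  · exact hjnk (hinj hj hnk h)

/-- Lemma 4.8: a cocyclic maximal `n`-gon is oriented-convex. -/
theorem maximal_cocyclic_is_oriented_convex (n : ℕ) (hn : 3 ≤ n) (z : ℕ → V3)
    (hz : ∀ k ∈ Finset.Icc 1 n, z k ∈ Hyp)
    (hpos : ∀ k ∈ Finset.Icc 1 n, 0 < dH (z k) (z (nxt n k)))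
    (hcyc : Cocyc (z '' Set.Icc 1 n))
    (hmax : ∀ w : ℕ → V3, (∀ k ∈ Finset.Icc 1 n, w k ∈ Hyp) →
      (∀ k ∈ Finset.Icc 1 n, dH (w k) (w (nxt n k)) = dH (z k) (z (nxt n k))) →
      polyArea n w ≤ polyArea n z) :
    OrientedConvex n z :=
  maximal_cocyclic_is_oriented_convex_general n z hz hpos hcyc hmax
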